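/- arXiv:2108.01989 — 2 statements merged into one kernel-verified Lean document; each statement's English description precedes it below -/
import Mathlib

section
/- Perfect renaming for 2 processes is impossible in the wait-free (iterated immediate snapshot) model: for the 2-process perfect renaming task (I,O,Δ) and for every t ≥ 0, there is no name-preserving, name-independent simplicial map δ : P^(t) → O such that δ(τ) ∈ Δ(σ) for every facet σ of I and every τ ∈ Exec^t(σ). -/
open scoped Classical
noncomputable section

namespace Speedup

abbrev Simplex (n : ℕ) (X : Type*) := Fin n → Option X

namespace Simplex
variable {n : ℕ} {X : Type*}
def le (σ' σ : Simplex n X) : Prop := ∀ i x, σ' i = some x → σ i = some x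
def NonemptyS (σ : Simplex n X) : Prop := ∃ i, σ i ≠ none
theorem le_trans {σ₁ σ₂ σ₃ : Simplex n X} (h₁ : le σ₁ σ₂) (h₂ : le σ₂ σ₃) : le σ₁ σ₃ :=
  fun i x h => h₂ i x (h₁ i x h)
end Simplex

structure Complex (n : ℕ) (X : Type*) where
  simplices : Set (Simplex n X)
  nonempty_mem : ∀ σ ∈ simplices, Simplex.NonemptyS σ
  down : ∀ σ ∈ simplices, ∀ σ' : Simplex n X,
    Simplex.le σ' σ → Simplex.NonemptyS σ' → σ' ∈ simplices

variable {n : ℕ}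

def cl {X : Type*} (S : Set (Simplex n X)) : Complex n X where
  simplices := {σ' | Simplex.NonemptyS σ' ∧ ∃ σ ∈ S, Simplex.le σ' σ}
  nonempty_mem := fun _ h => h.1
  down := by
    rintro σ ⟨_, τ, hτ, hστ⟩ σ' hle hne
    exact ⟨hne, τ, hτ, Simplex.le_trans hle hστ⟩

def Complex.isVertex {X : Type*} (K : Complex n X) (i : Fin n) (x : X) : Prop :=
  ∃ σ ∈ K.simplices, σ i = some x

def mapSimplex {X Y : Type*} (δ : Fin n → X → Y) (σ : Simplex n X) : Simplex n Y :=
  fun i => (σ i).map (δ i)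

def sameNames {X Y : Type*} (σ : Simplex n X) (τ : Simplex n Y) : Prop :=
  ∀ i, (σ i).isSome ↔ (τ i).isSome

/-- A facet: a maximal simplex. -/
def IsFacet {X : Type*} (K : Complex n X) (σ : Simplex n X) : Prop :=
  σ ∈ K.simplices ∧ ∀ τ ∈ K.simplices, Simplex.le σ τ → τ = σ

/-! ## The 2-process wait-free (iterated immediate snapshot) model -/

/-- The view of a process after one round: its previous view and its snapshot,
a multiset of views. -/
abbrev WfView (X : Type*) := X × Multiset X

/-- The simplex `{(1,a),(2,b)}` on two processes. -/
def pairS {X : Type*} (a b : X) : Simplex 2 X := ![some a, some b]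

/-- The simplex `{(i,a)}` on two processes. -/
def singleS {X : Type*} (i : Fin 2) (a : X) : Simplex 2 X :=
  fun j => if j = i then some a else none

/-- The three possible outcomes of a single immediate-snapshot round from a facet. -/
def wfStep {X : Type*} (σ : Simplex 2 X) : Set (Simplex 2 (WfView X)) :=
  {τ | ∃ a b : X, σ = pairS a b ∧
    (τ = pairS (a, {a}) (b, {a, b}) ∨
     τ = pairS (a, {a, b}) (b, {b}) ∨
     τ = pairS (a, {a, b}) (b, {a, b}))}

/-- The one-round wait-free operator `Ξ_WF`. -/
def xiWF {X : Type*} (K : Complex 2 X) : Complex 2 (WfView X) :=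
  cl ({τ | ∃ σ, IsFacet K σ ∧ τ ∈ wfStep σ} ∪
      {τ | ∃ i a, K.isVertex i a ∧ τ = singleS i (a, ({a} : Multiset X))})

/-- Views after `t` wait-free rounds. -/
def WfViewTy (X : Type*) : ℕ → Type _
  | 0 => X
  | t + 1 => WfView (WfViewTy X t)

/-- The wait-free protocol complex `P^(t)`. -/
def protocolWF {X : Type*} (K : Complex 2 X) : (t : ℕ) → Complex 2 (WfViewTy X t)
  | 0 => K
  | t + 1 => xiWF (protocolWF K t)

/-- `Exec^t(σ)`: facets of `P^(t)` reachable from the facet `σ` by `t` successive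
applications of the three one-round outcomes. -/
def execWF {X : Type*} : (t : ℕ) → Simplex 2 X → Set (Simplex 2 (WfViewTy X t))
  | 0, σ => {σ}
  | t + 1, σ => ⋃ τ ∈ execWF t σ, wfStep τ

/-- `solo^t(i,a)`: the view of a process running solo for `t` rounds. -/
def soloWF {X : Type*} : (t : ℕ) → X → WfViewTy X t
  | 0, a => a
  | t + 1, a => (soloWF t a, {soloWF t a})


/-! ## 2-process perfect renaming -/

/-- The input complex: facets `{(1,a),(2,b)}` for all distinct `a,b ∈ {0,1,2}`. -/
def renI : Complex 2 ℕ := cl {σ | ∃ a b : ℕ, a < 3 ∧ b < 3 ∧ a ≠ b ∧ σ = pairS a b}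

/-- The output complex: facets `{(1,c),(2,d)}` with `{c,d} = {0,1}`. -/
def renO : Complex 2 ℕ := cl {σ | ∃ a b : ℕ, a < 2 ∧ b < 2 ∧ a ≠ b ∧ σ = pairS a b}

/-- The specification: every output simplex on the same names is allowed. -/
def renRel (σ : Simplex 2 ℕ) : Set (Simplex 2 ℕ) :=
  {τ | τ ∈ renO.simplices ∧ sameNames σ τ}

lemma pairS_eq_iff {X : Type*} {a b c d : X} : pairS a b = pairS c d ↔ a = c ∧ b = d := by
  constructor
  · intro h
    have h0 := congrFun h 0
    have h1 := congrFun h 1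
    simp [pairS] at h0 h1
    exact ⟨h0, h1⟩
  · rintro ⟨rfl, rfl⟩; rfl

lemma exec_pairS {X : Type*} : ∀ (t : ℕ) (a b : X) (τ : Simplex 2 (WfViewTy X t)),
    τ ∈ execWF t (pairS a b) → ∃ u v, τ = pairS u v := by
  intro t
  induction t with
  | zero => intro a b τ hτ; exact ⟨a, b, hτ⟩
  | succ t ih =>
    intro a b τ hτ
    obtain ⟨ρ, _, u, v, _, h3⟩ := Set.mem_iUnion₂.mp hτ
    rcases h3 with h | h | h <;> exact ⟨_, _, h⟩

lemma key {X : Type*} (t : ℕ) : ∀ (a b : X) (f : WfViewTy X t → ℕ),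
    (∀ τ ∈ execWF t (pairS a b), ∃ u v, τ = pairS u v ∧ f u < 2 ∧ f v < 2 ∧ f u ≠ f v) →
    f (soloWF t a) < 2 ∧ f (soloWF t b) < 2 ∧ f (soloWF t a) ≠ f (soloWF t b) := by
  induction t with
  | zero =>
    intro a b f h
    obtain ⟨u, v, huv, h1, h2, h3⟩ := h (pairS a b) rfl
    obtain ⟨rfl, rfl⟩ := pairS_eq_iff.mp huv
    exact ⟨h1, h2, h3⟩
  | succ t ih =>
    intro a b f h
    set g : WfViewTy X t → ℕ := fun u => f (u, {u}) with hg
    have hstep : ∀ τ ∈ execWF t (pairS a b),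
        ∃ u v, τ = pairS u v ∧ g u < 2 ∧ g v < 2 ∧ g u ≠ g v := by
      intro τ hτ
      obtain ⟨u, v, rfl⟩ := exec_pairS t a b τ hτ
      have hmem : ∀ e ∈ wfStep (pairS u v), e ∈ execWF (t+1) (pairS a b) := by
        intro e he
        exact Set.mem_iUnion₂.mpr ⟨pairS u v, hτ, he⟩
      have h1 := h _ (hmem (pairS (u, {u}) (v, {u, v})) ⟨u, v, rfl, Or.inl rfl⟩)
      have h2 := h _ (hmem (pairS (u, {u, v}) (v, {v})) ⟨u, v, rfl, Or.inr (Or.inl rfl)⟩)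
      have h3 := h _ (hmem (pairS (u, {u, v}) (v, {u, v})) ⟨u, v, rfl, Or.inr (Or.inr rfl)⟩)
      obtain ⟨u1, v1, he1, ha1, hb1, hc1⟩ := h1
      obtain ⟨u2, v2, he2, ha2, hb2, hc2⟩ := h2
      obtain ⟨u3, v3, he3, ha3, hb3, hc3⟩ := h3
      obtain ⟨rfl, rfl⟩ := pairS_eq_iff.mp he1.symm
      obtain ⟨rfl, rfl⟩ := pairS_eq_iff.mp he2.symm
      obtain ⟨rfl, rfl⟩ := pairS_eq_iff.mp he3.symm
      refine ⟨u, v, rfl, ha1, hb2, ?_⟩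
      simp only [hg]
      omega
    have := ih a b g hstep
    exact this

lemma renI_facet {a b : ℕ} (ha : a < 3) (hb : b < 3) (hab : a ≠ b) :
    IsFacet renI (pairS a b) := by
  constructor
  · exact ⟨⟨0, by simp [pairS]⟩, pairS a b, ⟨a, b, ha, hb, hab, rfl⟩, fun i x h => h⟩
  · intro τ _ hle
    have h0 : τ 0 = some a := hle 0 a (by simp [pairS])
    have h1 : τ 1 = some b := hle 1 b (by simp [pairS])
    funext i
    fin_cases i <;> simp [pairS, h0, h1]

/-- Perfect renaming for 2 processes is impossible in the wait-free
(iterated immediate snapshot) model: for every `t ≥ 0`, there is no name-preserving,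
name-independent simplicial map `δ : P^(t) → O` such that `δ(τ) ∈ Δ(σ)` for every facet
`σ` of `I` and every `τ ∈ Exec^t(σ)`. -/
theorem renaming_impossible_waitfree (t : ℕ) :
    ¬ ∃ δ : Fin 2 → WfViewTy ℕ t → ℕ,
      (∀ (i j : Fin 2) (w : WfViewTy ℕ t), δ i w = δ j w) ∧
      (∀ σ ∈ (protocolWF renI t).simplices, mapSimplex δ σ ∈ renO.simplices) ∧
      (∀ σ, IsFacet renI σ → ∀ τ ∈ execWF t σ, mapSimplex δ τ ∈ renRel σ) := by
  rintro ⟨δ, hind, _hsimp, hsol⟩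
  set f : WfViewTy ℕ t → ℕ := δ 0 with hf
  have hmain : ∀ a b : ℕ, a < 3 → b < 3 → a ≠ b →
      f (soloWF t a) < 2 ∧ f (soloWF t b) < 2 ∧ f (soloWF t a) ≠ f (soloWF t b) := by
    intro a b ha hb hab
    apply key t a b f
    intro τ hτ
    obtain ⟨hmem, hnames⟩ := hsol (pairS a b) (renI_facet ha hb hab) τ hτ
    obtain ⟨u, v, rfl⟩ := exec_pairS t a b τ hτ
    have hmap : mapSimplex δ (pairS u v) = pairS (δ 0 u) (δ 1 v) := by
      funext i; fin_cases i <;> simp [mapSimplex, pairS]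
    rw [hmap] at hmem
    obtain ⟨_, ρ, ⟨c, d, hc, hd, hcd, rfl⟩, hle⟩ := hmem
    have h0 : c = δ 0 u := by
      have := hle 0 (δ 0 u) (by simp [pairS])
      simpa [pairS] using this
    have h1 : d = δ 1 v := by
      have := hle 1 (δ 1 v) (by simp [pairS])
      simpa [pairS] using this
    have hiv : δ 1 v = δ 0 v := hind 1 0 v
    refine ⟨u, v, rfl, ?_, ?_, ?_⟩
    · simp only [hf]; omega
    · simp only [hf]; rw [← hiv]; omega
    · simp only [hf]; rw [← hiv]; omega
  have h01 := hmain 0 1 (by norm_num) (by norm_num) (by norm_num)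
  have h12 := hmain 1 2 (by norm_num) (by norm_num) (by norm_num)
  have h02 := hmain 0 2 (by norm_num) (by norm_num) (by norm_num)
  omega

end Speedup
end
end

section
/- Binary consensus for 2 processes is impossible in the wait-free (iterated immediate snapshot) model: for the 2-process binary consensus task (I,O,Δ) and for every t ≥ 0, there is no name-preserving simplicial map δ : P^(t) → O such that δ(τ) ∈ Δ(σ) for every facet σ of I and every τ ∈ Exec^t(σ), and δ({solo^t(i,a)}) ∈ Δ({(i,a)}) for every vertex (i,a) of I. -/
open scoped Classical
noncomputable section

namespace Speedup

variable {n : ℕ}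

/-! ## 2-process binary consensus -/

/-- The input complex: facets `{(1,a),(2,b)}` for all `a,b ∈ {0,1}`. -/
def conI : Complex 2 ℕ := cl {σ | ∃ a b : ℕ, a < 2 ∧ b < 2 ∧ σ = pairS a b}

/-- The output complex: facets `{(1,c),(2,c)}` for `c ∈ {0,1}`. -/
def conO : Complex 2 ℕ := cl {σ | ∃ c : ℕ, c < 2 ∧ σ = pairS c c}

/-- The consensus specification. -/
def conRel (σ : Simplex 2 ℕ) : Set (Simplex 2 ℕ) :=
  {τ | (∃ i a, σ = singleS i a ∧ τ = singleS i a) ∨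
       (∃ a, σ = pairS a a ∧ τ = pairS a a) ∨
       (∃ a b, a ≠ b ∧ σ = pairS a b ∧ (τ = pairS 0 0 ∨ τ = pairS 1 1))}

lemma eq_pairS {X : Type*} {τ : Simplex 2 X} {x y : X}
    (h0 : τ 0 = some x) (h1 : τ 1 = some y) : τ = pairS x y := by
  funext i; fin_cases i <;> simp [pairS, h0, h1]

lemma chain (t : ℕ) (g0 g1 : WfViewTy ℕ t → ℕ)
    (H : ∀ τ ∈ execWF t (pairS (0:ℕ) 1), ∀ x y, τ 0 = some x → τ 1 = some y → g0 x = g1 y) :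
    g0 (soloWF t 0) = g1 (soloWF t 1) := by
  induction t with
  | zero => exact H _ rfl _ _ rfl rfl
  | succ t ih =>
    exact ih (fun x => g0 (x, {x})) (fun y => g1 (y, {y})) (by
      intro τ hτ x y h0 h1
      have hτp : τ = pairS x y := eq_pairS h0 h1
      have mem : ∀ σ' ∈ wfStep τ, σ' ∈ execWF (t+1) (pairS (0:ℕ) 1) := by
        intro σ' hσ'
        exact Set.mem_biUnion hτ hσ'
      have c1 := H _ (mem _ ⟨x, y, hτp, Or.inl rfl⟩) (x,{x}) (y,{x,y}) rfl rfl
      have c2 := H _ (mem _ ⟨x, y, hτp, Or.inr (Or.inl rfl)⟩) (x,{x,y}) (y,{y}) rfl rfl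
      have c3 := H _ (mem _ ⟨x, y, hτp, Or.inr (Or.inr rfl)⟩) (x,{x,y}) (y,{x,y}) rfl rfl
      calc g0 (x,{x}) = g1 (y,{x,y}) := c1
        _ = g0 (x,{x,y}) := c3.symm
        _ = g1 (y,{y}) := c2)

lemma pair01_facet : IsFacet conI (pairS (0:ℕ) 1) := by
  constructor
  · exact ⟨⟨0, by simp [pairS]⟩, pairS 0 1, ⟨0, 1, by norm_num, by norm_num, rfl⟩,
      fun i x h => h⟩
  · intro τ _ hle
    exact eq_pairS (hle 0 0 rfl) (hle 1 1 rfl)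

/-- Binary consensus for 2 processes is impossible in the wait-free
(iterated immediate snapshot) model: for every `t ≥ 0`, there is no name-preserving
simplicial map `δ : P^(t) → O` such that `δ(τ) ∈ Δ(σ)` for every facet `σ` of `I` and
every `τ ∈ Exec^t(σ)`, and `δ({solo^t(i,a)}) ∈ Δ({(i,a)})` for every vertex `(i,a)`
of `I`. -/
theorem consensus_impossible_waitfree (t : ℕ) :
    ¬ ∃ δ : Fin 2 → WfViewTy ℕ t → ℕ,
      (∀ σ ∈ (protocolWF conI t).simplices, mapSimplex δ σ ∈ conO.simplices) ∧
      (∀ σ, IsFacet conI σ → ∀ τ ∈ execWF t σ, mapSimplex δ τ ∈ conRel σ) ∧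
      (∀ (i : Fin 2) (a : ℕ), conI.isVertex i a →
        mapSimplex δ (singleS i (soloWF t a)) ∈ conRel (singleS i a)) := by
  rintro ⟨δ, -, hexec, hsolo⟩
  -- solo values
  have hv0 : conI.isVertex 0 0 :=
    ⟨pairS 0 1, pair01_facet.1, rfl⟩
  have hv1 : conI.isVertex 1 1 :=
    ⟨pairS 0 1, pair01_facet.1, rfl⟩
  have hδ0 : δ 0 (soloWF t 0) = 0 := by
    have h := hsolo 0 0 hv0
    rcases h with ⟨i, a, hσ, hτ⟩ | ⟨a, hσ, -⟩ | ⟨a, b, -, hσ, -⟩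
    · have h0 := congrFun hσ 0
      fin_cases i
      · simp [singleS] at h0
        have hτ0 := congrFun hτ 0
        simp [singleS, mapSimplex] at hτ0
        omega
      · simp [singleS] at h0
    · exact absurd (congrFun hσ 1) (by simp [singleS, pairS])
    · exact absurd (congrFun hσ 1) (by simp [singleS, pairS])
  have hδ1 : δ 1 (soloWF t 1) = 1 := by
    have h := hsolo 1 1 hv1
    rcases h with ⟨i, a, hσ, hτ⟩ | ⟨a, hσ, -⟩ | ⟨a, b, -, hσ, -⟩
    · have h1 := congrFun hσ 1
      fin_cases i
      · simp [singleS] at h1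
      · simp [singleS] at h1
        have hτ1 := congrFun hτ 1
        simp [singleS, mapSimplex] at hτ1
        omega
    · exact absurd (congrFun hσ 0) (by simp [singleS, pairS])
    · exact absurd (congrFun hσ 0) (by simp [singleS, pairS])
  have key := chain t (δ 0) (δ 1) (by
    intro τ hτ x y h0 h1
    have h := hexec (pairS 0 1) pair01_facet τ hτ
    rcases h with ⟨i, a, hσ, -⟩ | ⟨a, hσ, -⟩ | ⟨a, b, -, -, hτ' | hτ'⟩
    · have h0' := congrFun hσ 0
      have h1' := congrFun hσ 1
      fin_cases i <;> simp [singleS, pairS] at h0' h1'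
    · have h0' := congrFun hσ 0
      have h1' := congrFun hσ 1
      simp [pairS] at h0' h1'; omega
    all_goals {
      have e0 := congrFun hτ' 0
      have e1 := congrFun hτ' 1
      simp [mapSimplex, pairS, h0, h1] at e0 e1
      omega })
  rw [hδ0, hδ1] at key
  exact absurd key (by norm_num)


end Speedup
end
end
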